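/- Any two distinct columns of the sparse Kerdock matrix S^m either are orthogonal or have exactly one row at which both are nonzero; in the latter case the absolute value of their inner product is 2^{-m}, and in all cases the absolute inner product of two distinct columns is either 0 or 2^{-m}. -/

import Mathlib

/-- Binary vectors of length `m`. -/
abbrev BV (m : ℕ) := Fin m → ZMod 2

/-- Row indices of the sparse Kerdock matrix: pairs `(u1, u2)`. -/
abbrev KRow (m : ℕ) := BV m × BV m

/-- Column indices of the sparse Kerdock matrix: triples `(a1, a2, b)`. -/
abbrev KCol (m : ℕ) := BV m × BV m × BV m

/-- `P` is a Kerdock set: a family of symmetric binary matrices such that the sum of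
any two distinct members is invertible. -/
def IsKerdockSet {m : ℕ} (P : BV m → Matrix (Fin m) (Fin m) (ZMod 2)) : Prop :=
  (∀ b, (P b).IsSymm) ∧ ∀ b b', b ≠ b' → IsUnit (P b + P b')

/-- Entry of the sparse Kerdock matrix `S^m` at row `(u1, u2)` and column `(a1, a2, b)`:
`2^{-m/2} * (-1)^{⟨u1, a1⟩}` if `u1 (P b) + u2 = a2`, and `0` otherwise. -/
noncomputable def kerdockEntry (m : ℕ) (P : BV m → Matrix (Fin m) (Fin m) (ZMod 2))
    (u : KRow m) (c : KCol m) : ℝ :=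
  if Matrix.vecMul u.1 (P c.2.2) + u.2 = c.2.1 then
    (Real.sqrt (2 ^ m))⁻¹ * (-1 : ℝ) ^ ((∑ i, u.1 i * c.1 i).val)
  else 0


/-!
On the support of a column `(a1, a2, b)` the second row coordinate is determined by the first,
`u2 = a2 - u1 P b`. For columns with `b ≠ b'` the two support equations therefore force
`u1 (P b + P b') = a2 + a2'`, which has exactly one solution because `P b + P b'` is invertible:
the inner product is a single product of two entries of modulus `2^{-m/2}`. For columns with the
same `b` the supports coincide or are disjoint; in the first case `a1 ≠ a1'` and the inner product
is `2^{-m}` times the sum of the nontrivial character `u1 ↦ (-1)^{⟨u1, a1 + a1'⟩}`, hence zero.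
-/

open Matrix

noncomputable def signChar : AddChar (ZMod 2) ℝ :=
  AddChar.zmodChar 2 (by norm_num : (-1 : ℝ) ^ 2 = 1)

lemma signChar_apply (x : ZMod 2) : signChar x = (-1 : ℝ) ^ x.val := rfl

lemma abs_signChar (x : ZMod 2) : |signChar x| = 1 := by
  simp [signChar_apply]

lemma sum_signChar_dotProduct_eq_zero {n : Type*} [Fintype n] [DecidableEq n]
    {d : n → ZMod 2} (hd : d ≠ 0) : ∑ u : n → ZMod 2, signChar (u ⬝ᵥ d) = 0 := by
  let ψ : AddChar (n → ZMod 2) ℝ :=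
    signChar.compAddMonoidHom (AddMonoidHom.mk' (· ⬝ᵥ d) fun u v ↦ add_dotProduct u v d)
  have hψ : ψ ≠ 1 := by
    obtain ⟨i, hi⟩ := Function.ne_iff.mp hd
    have hdi : d i = 1 := (by decide : ∀ x : ZMod 2, x ≠ 0 → x = 1) _ hi
    refine AddChar.ne_one_iff.mpr ⟨Pi.single i 1, ?_⟩
    norm_num [ψ, single_dotProduct, hdi, signChar_apply, ZMod.val_one]
  exact AddChar.sum_eq_zero_of_ne_one hψ

lemma existsUnique_vecMul_add_eq_of_isUnit_sub {n R : Type*} [Fintype n] [DecidableEq n]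
    [CommRing R] {A B : Matrix n n R} (hAB : IsUnit (A - B)) (x y : n → R) :
    ∃! u : (n → R) × (n → R), u.1 ᵥ* A + u.2 = x ∧ u.1 ᵥ* B + u.2 = y := by
  have key : ∀ u : (n → R) × (n → R), (u.1 ᵥ* A + u.2 = x ∧ u.1 ᵥ* B + u.2 = y) ↔
      (u.1 ᵥ* (A - B) = x - y ∧ u.2 = x - u.1 ᵥ* A) := by
    rintro ⟨u1, u2⟩
    dsimp only
    rw [vecMul_sub]
    constructor
    · rintro ⟨rfl, rfl⟩
      exact ⟨by abel, by abel⟩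
    · rintro ⟨h, rfl⟩
      refine ⟨by abel, ?_⟩
      rw [show u1 ᵥ* B = u1 ᵥ* A - (x - y) by rw [← h]; abel]
      abel
  obtain ⟨v, hv⟩ := vecMul_surjective_iff_isUnit.mpr hAB (x - y)
  refine ⟨(v, x - v ᵥ* A), (key _).mpr ⟨hv, rfl⟩, fun u hu ↦ ?_⟩
  obtain ⟨h1, h2⟩ := (key u).mp hu
  have hu1 : u.1 = v := vecMul_injective_of_isUnit hAB (h1.trans hv.symm)
  exact Prod.ext hu1 (by rw [h2, hu1])

lemma sum_prod_ite_add_eq {α β γ : Type*} [Fintype α] [Fintype β] [AddCommGroup β]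
    [DecidableEq β] [AddCommMonoid γ] (g : α → β) (a : β) (f : α → γ) :
    ∑ u : α × β, (if g u.1 + u.2 = a then f u.1 else 0) = ∑ x, f x := by
  rw [Fintype.sum_prod_type]
  refine Finset.sum_congr rfl fun x _ ↦ ?_
  simp only [← eq_sub_iff_add_eq', Finset.sum_ite_eq', Finset.mem_univ, if_true]

section KerdockEntry

variable {m : ℕ} (P : BV m → Matrix (Fin m) (Fin m) (ZMod 2))

lemma kerdockEntry_eq (u : KRow m) (c : KCol m) :
    kerdockEntry m P u c = if u.1 ᵥ* P c.2.2 + u.2 = c.2.1 then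
      (Real.sqrt (2 ^ m))⁻¹ * signChar (u.1 ⬝ᵥ c.1) else 0 := rfl

lemma kerdockEntry_ne_zero_iff (u : KRow m) (c : KCol m) :
    kerdockEntry m P u c ≠ 0 ↔ u.1 ᵥ* P c.2.2 + u.2 = c.2.1 := by
  rw [kerdockEntry_eq]
  split_ifs with h
  · have hsign : signChar (u.1 ⬝ᵥ c.1) ≠ 0 := fun h0 ↦ by
      simpa [h0] using abs_signChar (u.1 ⬝ᵥ c.1)
    simpa [h] using hsign
  · simp [h]

lemma kerdockEntry_mul_kerdockEntry (u : KRow m) (c c' : KCol m) :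
    kerdockEntry m P u c * kerdockEntry m P u c' =
      if u.1 ᵥ* P c.2.2 + u.2 = c.2.1 ∧ u.1 ᵥ* P c'.2.2 + u.2 = c'.2.1 then
        ((2 : ℝ) ^ m)⁻¹ * signChar (u.1 ⬝ᵥ (c.1 + c'.1)) else 0 := by
  have hsqrt : (Real.sqrt (2 ^ m))⁻¹ * (Real.sqrt (2 ^ m))⁻¹ = ((2 : ℝ) ^ m)⁻¹ := by
    rw [← mul_inv, Real.mul_self_sqrt (by positivity)]
  rw [kerdockEntry_eq, kerdockEntry_eq, dotProduct_add, AddChar.map_add_eq_mul, ← hsqrt]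
  simp only [ite_and]
  split_ifs <;> ring

lemma sum_kerdockEntry_mul_eq_zero_of_snd_snd_eq {c c' : KCol m} (hb : c.2.2 = c'.2.2) (hc : c ≠ c') :
    ∑ u : KRow m, kerdockEntry m P u c * kerdockEntry m P u c' = 0 := by
  obtain ⟨a1, a2, b⟩ := c
  obtain ⟨a1', a2', b'⟩ := c'
  dsimp only at hb
  subst hb
  simp_rw [kerdockEntry_mul_kerdockEntry]
  by_cases ha2 : a2 = a2'
  · subst ha2
    have hd : a1 + a1' ≠ 0 := by
      rw [← ZModModule.sub_eq_add, sub_ne_zero]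
      rintro rfl
      exact hc rfl
    simp only [and_self]
    rw [sum_prod_ite_add_eq (· ᵥ* P b) a2 fun u1 ↦ ((2 : ℝ) ^ m)⁻¹ * signChar (u1 ⬝ᵥ (a1 + a1')),
      ← Finset.mul_sum, sum_signChar_dotProduct_eq_zero hd, mul_zero]
  · refine Finset.sum_eq_zero fun u _ ↦ if_neg ?_
    rintro ⟨h1, h2⟩
    exact ha2 (h1.symm.trans h2)

lemma card_common_support_eq_one_and_abs_sum_kerdockEntry_mul {c c' : KCol m}
    (hunit : IsUnit (P c.2.2 + P c'.2.2)) :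
    Nat.card {u : KRow m // kerdockEntry m P u c ≠ 0 ∧ kerdockEntry m P u c' ≠ 0} = 1 ∧
      |∑ u : KRow m, kerdockEntry m P u c * kerdockEntry m P u c'| = ((2 : ℝ) ^ m)⁻¹ := by
  obtain ⟨u₀, hu₀, huniq⟩ := existsUnique_vecMul_add_eq_of_isUnit_sub
    (A := P c.2.2) (B := P c'.2.2) (by rwa [ZModModule.sub_eq_add]) c.2.1 c'.2.1
  simp only [kerdockEntry_ne_zero_iff, kerdockEntry_mul_kerdockEntry]
  refine ⟨Nat.card_eq_one_iff_exists.mpr ⟨⟨u₀, hu₀⟩, fun u ↦ Subtype.ext (huniq u u.2)⟩, ?_⟩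
  rw [Fintype.sum_eq_single u₀ fun u hu ↦ if_neg fun h ↦ hu (huniq u h), if_pos hu₀, abs_mul,
    abs_signChar, mul_one, abs_of_pos (by positivity)]

end KerdockEntry

theorem sparse_kerdock_two_columns_general (m : ℕ)
    (P : BV m → Matrix (Fin m) (Fin m) (ZMod 2)) (hP : IsKerdockSet P)
    (c1 c2 : KCol m) (hc : c1 ≠ c2) :
    ((∑ u : KRow m, kerdockEntry m P u c1 * kerdockEntry m P u c2 = 0) ∨
      (Nat.card {u : KRow m // kerdockEntry m P u c1 ≠ 0 ∧ kerdockEntry m P u c2 ≠ 0} = 1 ∧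
        |∑ u : KRow m, kerdockEntry m P u c1 * kerdockEntry m P u c2| = ((2 : ℝ) ^ m)⁻¹)) ∧
    (|∑ u : KRow m, kerdockEntry m P u c1 * kerdockEntry m P u c2| = 0 ∨
      |∑ u : KRow m, kerdockEntry m P u c1 * kerdockEntry m P u c2| = ((2 : ℝ) ^ m)⁻¹) := by
  rcases eq_or_ne c1.2.2 c2.2.2 with hb | hb
  · have h := sum_kerdockEntry_mul_eq_zero_of_snd_snd_eq P hb hc
    exact ⟨Or.inl h, Or.inl (by rw [h, abs_zero])⟩
  · have h := card_common_support_eq_one_and_abs_sum_kerdockEntry_mul P (hP.2 _ _ hb)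
    exact ⟨Or.inr h, Or.inr h.2⟩

/-- Any two distinct columns of `S^m` either are orthogonal or have exactly one common
support row, in which case the absolute inner product is `2^{-m}`; in all cases the
absolute inner product is `0` or `2^{-m}`. -/
theorem sparse_kerdock_two_columns (m : ℕ) (hm : 1 ≤ m)
    (P : BV m → Matrix (Fin m) (Fin m) (ZMod 2)) (hP : IsKerdockSet P)
    (c1 c2 : KCol m) (hc : c1 ≠ c2) :
    ((∑ u : KRow m, kerdockEntry m P u c1 * kerdockEntry m P u c2 = 0) ∨
      (Nat.card {u : KRow m // kerdockEntry m P u c1 ≠ 0 ∧ kerdockEntry m P u c2 ≠ 0} = 1 ∧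
        |∑ u : KRow m, kerdockEntry m P u c1 * kerdockEntry m P u c2| = ((2 : ℝ) ^ m)⁻¹)) ∧
    (|∑ u : KRow m, kerdockEntry m P u c1 * kerdockEntry m P u c2| = 0 ∨
      |∑ u : KRow m, kerdockEntry m P u c1 * kerdockEntry m P u c2| = ((2 : ℝ) ^ m)⁻¹) :=
  sparse_kerdock_two_columns_general m P hP c1 c2 hc
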